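/- Let λ = {k_1,…,k_q} be a partition of k and let λ'' = {k''_1,…,k''_q} be a partition of k'' with k''_i ≥ k_i for every i (that is, λ'' is obtained from λ by increasing some parts of λ). Then every λ-choosable finite simple graph is λ''-choosable. -/

import Mathlib

/-- `lam` is a partition of `k`: a finite multiset of positive integers summing to `k`. -/
def IsPartitionOf (lam : Multiset ℕ) (k : ℕ) : Prop :=
  (∀ a ∈ lam, 0 < a) ∧ lam.sum = k

/-- `lam'` is a refinement of `lam`: `lam'` is obtained from `lam` by replacing
some parts of `lam` by partitions of these parts. -/
def PartitionRefines (lam' lam : Multiset ℕ) : Prop :=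
  ∃ M : Multiset (Multiset ℕ),
    M.map Multiset.sum = lam ∧ M.join = lam' ∧ ∀ m ∈ M, ∀ a ∈ m, 0 < a

/-- `lam ≤ lam'`: there is a partition `lam''` obtained from `lam` by increasing
some of its parts such that `lam'` is a refinement of `lam''`. -/
def PartitionLE (lam lam' : Multiset ℕ) : Prop :=
  ∃ lam'' : Multiset ℕ, Multiset.Rel (· ≤ ·) lam lam'' ∧ PartitionRefines lam' lam''

/-- `L` is a `lam`-assignment: a `k`-assignment (`k = lam.sum`) such that the set of colours
`⋃ v, L v` can be partitioned into colour groups `C_1, …, C_q` with `|L v ∩ C_i| = k_i`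
for every vertex `v` and every part `k_i` of `lam`. -/
def IsLamAssignment {V : Type*} (lam : Multiset ℕ) (L : V → Finset ℕ) : Prop :=
  (∀ v, (L v).card = lam.sum) ∧
  ∃ (q : ℕ) (ks : Fin q → ℕ) (Cs : Fin q → Finset ℕ),
    (↑(List.ofFn ks) : Multiset ℕ) = lam ∧
    (Pairwise fun i j => Disjoint (Cs i) (Cs j)) ∧
    (∀ c : ℕ, (∃ v, c ∈ L v) ↔ ∃ i, c ∈ Cs i) ∧
    ∀ v i, ((L v) ∩ Cs i).card = ks i

/-- `G` is `lam`-choosable: `G` has a proper `L`-colouring for every `lam`-assignment `L`. -/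
def LamChoosable {V : Type*} (lam : Multiset ℕ) (G : SimpleGraph V) : Prop :=
  ∀ L : V → Finset ℕ, IsLamAssignment lam L →
    ∃ f : V → ℕ, (∀ v, f v ∈ L v) ∧ ∀ ⦃u w⦄, G.Adj u w → f u ≠ f w

/-!
A `lam''`-assignment `L` contains a `lam`-assignment: inside each colour group `C_i`, shrink
every list `L v ∩ C_i` to a subset of the smaller size `k_i`, and keep only the colours that are
still used. A proper colouring from the smaller lists is one from `L`.
-/

theorem Multiset.exists_ofFn_of_rel_ofFn {α β : Type*} {r : α → β → Prop} :
    ∀ {n : ℕ} (f : Fin n → β) {m : Multiset α}, Multiset.Rel r m ↑(List.ofFn f) →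
      ∃ g : Fin n → α, (↑(List.ofFn g) : Multiset α) = m ∧ ∀ i, r (g i) (f i)
  | 0, _, _, h => ⟨Fin.elim0, by simpa [eq_comm] using h, fun i => i.elim0⟩
  | n + 1, f, m, h => by
    rw [List.ofFn_succ, ← Multiset.cons_coe, Multiset.rel_cons_right] at h
    obtain ⟨a, m', hhead, htail, rfl⟩ := h
    obtain ⟨g, rfl, hg⟩ := exists_ofFn_of_rel_ofFn (fun i => f i.succ) htail
    exact ⟨Fin.cons a g, by simp [List.ofFn_succ], Fin.cases hhead hg⟩

section

open Finset

variable {V : Type*}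

theorem exists_lamAssignment_subset {L : V → Finset ℕ} {q : ℕ} {ks g : Fin q → ℕ}
    {Cs : Fin q → Finset ℕ} (hdisj : Pairwise fun i j => Disjoint (Cs i) (Cs j))
    (hcount : ∀ v i, (L v ∩ Cs i).card = ks i) (hle : ∀ i, g i ≤ ks i) :
    ∃ L' : V → Finset ℕ, (∀ v, L' v ⊆ L v) ∧ IsLamAssignment (↑(List.ofFn g)) L' := by
  classical
  choose S hS hScard using fun v i =>
    exists_subset_card_eq (s := L v ∩ Cs i) (n := g i) ((hle i).trans (hcount v i).ge)
  have hSL : ∀ v i, S v i ⊆ L v := fun v i => (hS v i).trans inter_subset_left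
  have hSC : ∀ v i, S v i ⊆ Cs i := fun v i => (hS v i).trans inter_subset_right
  set L' : V → Finset ℕ := fun v => univ.biUnion (S v)
  have hL'C : ∀ v i, L' v ∩ Cs i = S v i := by
    intro v i
    ext c
    simp only [L', mem_inter, mem_biUnion, mem_univ, true_and]
    refine ⟨fun ⟨⟨j, hj⟩, hci⟩ => ?_, fun hc => ⟨⟨i, hc⟩, hSC v i hc⟩⟩
    obtain rfl | hji := eq_or_ne j i
    · exact hj
    · exact absurd hci (disjoint_left.mp (hdisj hji) (hSC v j hj))
  let Cs' : Fin q → Finset ℕ := fun i => (Cs i).filter fun c => ∃ v, c ∈ L' v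
  have hL'C' : ∀ v i, L' v ∩ Cs' i = S v i := fun v i => by
    rw [inter_filter, filter_true_of_mem fun c hc => ⟨v, (mem_inter.mp hc).1⟩, hL'C]
  have hcard : ∀ v, (L' v).card = (↑(List.ofFn g) : Multiset ℕ).sum := fun v => by
    rw [card_biUnion fun i _ j _ hij => (hdisj hij).mono (hSC v i) (hSC v j)]
    simp [hScard, List.sum_ofFn]
  have hcover : ∀ c, (∃ v, c ∈ L' v) ↔ ∃ i, c ∈ Cs' i := fun c => by
    refine ⟨fun ⟨v, hv⟩ => ?_, fun ⟨i, hi⟩ => (mem_filter.mp hi).2⟩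
    obtain ⟨i, -, hi⟩ := mem_biUnion.mp hv
    exact ⟨i, mem_filter.mpr ⟨hSC v i hi, v, hv⟩⟩
  exact ⟨L', fun v => biUnion_subset.mpr fun i _ => hSL v i, hcard, q, g, Cs', rfl,
    fun i j hij => (hdisj hij).mono (filter_subset _ _) (filter_subset _ _), hcover,
    fun v i => by rw [hL'C', hScard]⟩

theorem IsLamAssignment.exists_subset_of_rel {lam lam' : Multiset ℕ} {L : V → Finset ℕ}
    (hL : IsLamAssignment lam' L) (hrel : Multiset.Rel (· ≤ ·) lam lam') :
    ∃ L' : V → Finset ℕ, (∀ v, L' v ⊆ L v) ∧ IsLamAssignment lam L' := by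
  obtain ⟨-, q, ks, Cs, rfl, hdisj, -, hcount⟩ := hL
  obtain ⟨g, rfl, hle⟩ := Multiset.exists_ofFn_of_rel_ofFn ks hrel
  exact exists_lamAssignment_subset hdisj hcount hle

theorem LamChoosable.of_rel {lam lam' : Multiset ℕ} {G : SimpleGraph V}
    (hrel : Multiset.Rel (· ≤ ·) lam lam') (h : LamChoosable lam G) : LamChoosable lam' G := by
  intro L hL
  obtain ⟨L', hL'L, hL'⟩ := hL.exists_subset_of_rel hrel
  obtain ⟨f, hf, hproper⟩ := h L' hL'
  exact ⟨f, fun v => hL'L v (hf v), hproper⟩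

end

theorem lamChoosable_of_increasing_parts_general (q : ℕ) (ks ks'' : Fin q → ℕ)
    (hge : ∀ i, ks i ≤ ks'' i)
    {V : Type*} (G : SimpleGraph V)
    (h : LamChoosable (↑(List.ofFn ks)) G) :
    LamChoosable (↑(List.ofFn ks'')) G := by
  refine h.of_rel ?_
  rw [List.ofFn_eq_map, List.ofFn_eq_map, ← Multiset.map_coe, ← Multiset.map_coe,
    Multiset.rel_map]
  exact Multiset.rel_refl_of_refl_on fun i _ => hge i

/-- Let `lam = {ks 0, …, ks (q-1)}` be a partition of `k` and `lam'' = {ks'' 0, …, ks'' (q-1)}`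
a partition of `k''` with `ks'' i ≥ ks i` for every `i` (i.e. `lam''` is obtained from `lam`
by increasing some parts). Then every `lam`-choosable finite simple graph is
`lam''`-choosable. -/
theorem lamChoosable_of_increasing_parts (q k k'' : ℕ) (ks ks'' : Fin q → ℕ)
    (hpos : ∀ i, 0 < ks i) (hpos'' : ∀ i, 0 < ks'' i) (hge : ∀ i, ks i ≤ ks'' i)
    (hk : (List.ofFn ks).sum = k) (hk'' : (List.ofFn ks'').sum = k'')
    {V : Type*} [Fintype V] (G : SimpleGraph V)
    (h : LamChoosable (↑(List.ofFn ks)) G) :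
    LamChoosable (↑(List.ofFn ks'')) G :=
  lamChoosable_of_increasing_parts_general q ks ks'' hge G h
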